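/- arXiv:1310.3702 — 4 statements merged into one kernel-verified Lean document; each statement's English description precedes it below -/
import Mathlib

section
/- Let E be a finite-dimensional ℂ-algebra and P an indecomposable projective E-module. Then ρ(P) = 1 + ρ(rad P), where ρ(M) = Σ_e χ(Gr_e(M)) is the sum of Euler characteristics of submodule Grassmannians. -/
structure K0Like (E : Type) [Ring E] (K : Type) [AddCommGroup K] : Type 1 where
  cls : ∀ (N : Type) [AddCommGroup N] [Module E N], K
  iso_inv : ∀ (N N' : Type) [AddCommGroup N] [Module E N] [AddCommGroup N'] [Module E N'],
    Nonempty (N ≃ₗ[E] N') → cls N = cls N'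
  additive : ∀ (A B C : Type) [AddCommGroup A] [Module E A] [AddCommGroup B] [Module E B]
    [AddCommGroup C] [Module E C] (i : A →ₗ[E] B) (p : B →ₗ[E] C),
    Function.Injective i → Function.Surjective p →
    LinearMap.range i = LinearMap.ker p → IsFiniteLength E B →
    cls B = cls A + cls C
  sep : ∀ (N : Type) [AddCommGroup N] [Module E N], IsFiniteLength E N →
    ∀ N' : Submodule E N, cls N' = cls N → N' = ⊤

/-!
Every proper submodule of `P` lies in a maximal one, and by Fitting's lemma the maximal submodule
of an indecomposable projective module of finite length is unique, hence equal to `rad P`.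
So for `e ≠ [P]` the submodules of `P` of class `e` are exactly those of `rad P`, while the only
submodule of `P` of class `[P]` is `P` itself and `rad P` has none. The two sums therefore differ
only in the term `e = [P]`, which contributes `χ(point) = 1` on the left and `χ(∅) = 0` on the
right; the sums are finite because a finite-length module has finitely many submodule classes.
-/

theorem finsum_add_eq_add_finsum_of_eq_of_ne {K M : Type*} [AddCommGroup M] {f g : K → M}
    {c : K} (hg : (Function.support g).Finite) (hfg : ∀ e ≠ c, f e = g e) :
    ∑ᶠ e, f e + g c = f c + ∑ᶠ e, g e := by
  classical
  set T := insert c hg.toFinset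
  have hgT : Function.support g ⊆ T := fun e he => by simp [T, he]
  have hfT : Function.support f ⊆ T := fun e he => by
    by_cases hec : e = c
    · simp [T, hec]
    · exact hgT (by rwa [Function.mem_support, ← hfg e hec])
  have hc : c ∈ T := Finset.mem_insert_self _ _
  have herase : ∑ e ∈ T.erase c, f e = ∑ e ∈ T.erase c, g e :=
    Finset.sum_congr rfl fun e he => hfg e (Finset.ne_of_mem_erase he)
  rw [finsum_eq_sum_of_support_subset f hfT, finsum_eq_sum_of_support_subset g hgT,
    ← Finset.add_sum_erase T f hc, ← Finset.add_sum_erase T g hc, herase]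
  abel

theorem Module.End.surjective_or_isNilpotent {R M : Type*} [Ring R] [AddCommGroup M]
    [Module R M] [IsNoetherian R M] [IsArtinian R M]
    (hindec : ∀ N N' : Submodule R M, IsCompl N N' → N = ⊥ ∨ N = ⊤) (φ : Module.End R M) :
    Function.Surjective φ ∨ IsNilpotent φ := by
  obtain ⟨n, hcompl, hn⟩ :=
    (φ.eventually_isCompl_ker_pow_range_pow.and (Filter.eventually_ge_atTop 1)).exists
  rcases hindec _ _ hcompl with hker | hker
  · left
    have hrange : LinearMap.range (φ ^ n) = ⊤ := by
      simpa [hker] using hcompl.codisjoint.eq_top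
    obtain ⟨m, rfl⟩ : ∃ m, n = m + 1 := ⟨n - 1, by omega⟩
    rw [← LinearMap.range_eq_top, eq_top_iff, ← hrange, pow_succ', Module.End.mul_eq_comp,
      LinearMap.range_comp]
    exact LinearMap.map_le_range
  · exact Or.inr ⟨n, LinearMap.ker_eq_top.mp hker⟩

section Radical

variable {R P : Type*} [Ring R] [AddCommGroup P] [Module R P] [Module.Projective R P]
  [IsNoetherian R P] [IsArtinian R P]

/-- Lifting `P → P/m₂` along the surjection `m₁ → P/m₂` gives an endomorphism `φ` with image in
`m₁` and `1 - φ` with image in `m₂`; by Fitting's lemma `φ` or `1 - φ` is surjective. -/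
theorem Submodule.eq_of_isCoatom_of_projective
    (hindec : ∀ N N' : Submodule R P, IsCompl N N' → N = ⊥ ∨ N = ⊤)
    {m₁ m₂ : Submodule R P} (h₁ : IsCoatom m₁) (h₂ : IsCoatom m₂) : m₁ = m₂ := by
  by_contra hne
  have hsurj : Function.Surjective (m₂.mkQ ∘ₗ m₁.subtype) := by
    rw [← LinearMap.range_eq_top, LinearMap.range_comp, Submodule.range_subtype,
      Submodule.map_mkQ_eq_top]
    exact h₂.sup_eq_top_of_ne h₁ (Ne.symm hne)
  obtain ⟨ψ, hψ⟩ := Module.projective_lifting_property _ m₂.mkQ hsurj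
  set φ : Module.End R P := m₁.subtype ∘ₗ ψ
  have hφ : ∀ x, φ x ∈ m₁ := fun x => (ψ x).2
  have hφ' : ∀ x, (1 - φ) x ∈ m₂ := fun x => by
    have hx : m₂.mkQ (φ x) = m₂.mkQ x := LinearMap.congr_fun hψ x
    rwa [Submodule.mkQ_apply, Submodule.mkQ_apply, Submodule.Quotient.eq, ← neg_mem_iff,
      neg_sub] at hx
  rcases Module.End.surjective_or_isNilpotent hindec φ with hφsurj | hnil
  · exact h₁.1 (eq_top_iff.mpr fun x _ => (hφsurj x).elim fun y hy => hy ▸ hφ y)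
  · have hunit := (Module.End.isUnit_iff _).mp hnil.isUnit_one_sub
    exact h₂.1 (eq_top_iff.mpr fun x _ => (hunit.2 x).elim fun y hy => hy ▸ hφ' y)

theorem Module.le_jacobson_of_ne_top_of_projective
    (hindec : ∀ N N' : Submodule R P, IsCompl N N' → N = ⊥ ∨ N = ⊤)
    {L : Submodule R P} (hL : L ≠ ⊤) : L ≤ Module.jacobson R P := by
  obtain ⟨m, hm, hLm⟩ := (eq_top_or_exists_le_coatom L).resolve_left hL
  exact le_sInf fun m' hm' => Submodule.eq_of_isCoatom_of_projective hindec hm hm' ▸ hLm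

end Radical

namespace K0Like

variable {E K : Type} [Ring E] [AddCommGroup K] (k : K0Like E K)
  {M : Type} [AddCommGroup M] [Module E M]

theorem cls_top : k.cls (⊤ : Submodule E M) = k.cls M :=
  k.iso_inv _ _ ⟨Submodule.topEquiv⟩

theorem cls_map_subtype (N : Submodule E M) (L : Submodule E N) :
    k.cls (L.map N.subtype) = k.cls L :=
  k.iso_inv _ _ ⟨(Submodule.equivMapOfInjective N.subtype N.injective_subtype L).symm⟩

theorem setOf_cls_eq_eq_image_map {N : Submodule E M} {e : K}
    (h : ∀ L : Submodule E M, k.cls L = e → L ≤ N) :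
    {L : Submodule E M | k.cls L = e} =
      Submodule.map N.subtype '' {L : Submodule E N | k.cls L = e} := by
  ext L
  constructor
  · intro hL
    have hmap : (L.comap N.subtype).map N.subtype = L := by
      rw [Submodule.map_comap_subtype, inf_eq_right.mpr (h L hL)]
    refine ⟨L.comap N.subtype, ?_, hmap⟩
    rw [Set.mem_ofPred_eq, ← k.cls_map_subtype, hmap]
    exact hL
  · rintro ⟨L, hL, rfl⟩
    rw [Set.mem_ofPred_eq, k.cls_map_subtype]
    exact hL

theorem support_subset_range_cls {A : Type*} [Zero A] (χ : Set (Submodule E M) → A)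
    (hempty : χ ∅ = 0) :
    Function.support (fun e => χ {L | k.cls L = e}) ⊆
      Set.range fun L : Submodule E M => k.cls L := by
  refine Function.support_subset_iff'.mpr fun e he => ?_
  rw [Set.eq_empty_of_forall_notMem (s := {L : Submodule E M | k.cls L = e})
    fun L hL => he ⟨L, hL⟩, hempty]

variable [IsNoetherian E M] [IsArtinian E M]

theorem eq_top_of_cls_eq {L : Submodule E M} (hL : k.cls L = k.cls M) : L = ⊤ :=
  k.sep M (isFiniteLength_iff_isNoetherian_isArtinian.mpr ⟨inferInstance, inferInstance⟩) L hL

theorem setOf_cls_eq_cls_eq_singleton_top :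
    {L : Submodule E M | k.cls L = k.cls M} = {⊤} := by
  ext L
  exact ⟨k.eq_top_of_cls_eq, fun hL => hL ▸ k.cls_top⟩

theorem setOf_cls_eq_cls_eq_empty {N : Submodule E M} (hN : N ≠ ⊤) :
    {L : Submodule E N | k.cls L = k.cls M} = ∅ :=
  Set.eq_empty_of_forall_notMem fun L hL => hN <| top_le_iff.mp <|
    k.eq_top_of_cls_eq ((k.cls_map_subtype N L).trans hL) ▸ Submodule.map_subtype_le N L

/-- The second isomorphism theorem `L/(L ⊓ m) ≅ (L ⊔ m)/m`, combined with additivity of `cls`. -/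
theorem cls_eq_cls_inf_add_cls_quotient {L m N : Submodule E M} (hN : L ⊔ m = N) :
    k.cls L = k.cls ↥(L ⊓ m) + k.cls (↥N ⧸ Submodule.comap N.subtype m) := by
  subst hN
  rw [k.additive _ _ _ (Submodule.inclusion inf_le_left)
      (Submodule.comap L.subtype (L ⊓ m)).mkQ (Submodule.inclusion_injective _)
      (Submodule.mkQ_surjective _) (by rw [Submodule.range_inclusion, Submodule.ker_mkQ])
      (isFiniteLength_iff_isNoetherian_isArtinian.mpr ⟨inferInstance, inferInstance⟩)]
  exact congrArg _ (k.iso_inv _ _ ⟨LinearMap.quotientInfEquivSupQuotient L m⟩)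

/-- Induction on `N`: if `m ⋖ N`, a submodule `L ≤ N` either lies in `m` or has class
`[L ⊓ m] + [N/m]`. -/
theorem finite_image_cls_Iic (N : Submodule E M) :
    ((fun L : Submodule E M => k.cls L) '' Set.Iic N).Finite := by
  induction N using WellFoundedLT.induction with
  | _ N ih =>
  rcases eq_or_ne N ⊥ with rfl | hN
  · simp
  obtain ⟨m, hm⟩ := exists_covBy_of_wellFoundedGT (not_isMin_iff_ne_bot.mpr hN)
  refine ((ih m hm.lt).union ((ih m hm.lt).image
    (· + k.cls (↥N ⧸ Submodule.comap N.subtype m)))).subset ?_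
  rintro _ ⟨L, hLN, rfl⟩
  by_cases hLm : L ≤ m
  · exact Or.inl ⟨L, hLm, rfl⟩
  have hsup : L ⊔ m = N := (hm.eq_or_eq le_sup_right (sup_le hLN hm.le)).resolve_left
    fun h => hLm (h ▸ le_sup_left)
  exact Or.inr ⟨_, ⟨L ⊓ m, Set.mem_Iic.mpr inf_le_right, rfl⟩,
    (k.cls_eq_cls_inf_add_cls_quotient hsup).symm⟩

theorem finite_range_cls : (Set.range fun L : Submodule E M => k.cls L).Finite := by
  simpa using k.finite_image_cls_Iic ⊤

end K0Like

theorem stmt_6_general {E : Type} [Ring E] [Algebra ℂ E]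
    {P : Type} [AddCommGroup P] [Module E P] [Module ℂ P] [IsScalarTower ℂ E P]
    [FiniteDimensional ℂ P] [Nontrivial P]
    [Module.Projective E P]
    (hindec : ∀ N N' : Submodule E P, IsCompl N N' → N = ⊥ ∨ N = ⊤)
    {K : Type} [AddCommGroup K] (k : K0Like E K)
    (χ : ∀ (N : Type) [AddCommGroup N] [Module E N], Set (Submodule E N) → ℤ)
    (hempty : ∀ (N : Type) [AddCommGroup N] [Module E N], χ N (∅ : Set (Submodule E N)) = 0)
    (hsingle : ∀ (N : Type) [AddCommGroup N] [Module E N] (x : Submodule E N), χ N {x} = 1)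
    (hembed : ∀ (N : Type) [AddCommGroup N] [Module E N] (N' : Submodule E N)
      (S : Set (Submodule E N')),
      χ N' S = χ N ((fun L => Submodule.map N'.subtype L) '' S)) :
    (∑ᶠ e : K, χ P {L : Submodule E P | k.cls L = e}) =
      1 + ∑ᶠ e : K, χ (↥(sInf {m : Submodule E P | IsCoatom m}))
            {L : Submodule E (↥(sInf {m : Submodule E P | IsCoatom m})) |
              k.cls L = e} := by
  have : IsNoetherian E P := isNoetherian_of_tower ℂ inferInstance
  have : IsArtinian E P := isArtinian_of_tower ℂ inferInstance
  change _ = 1 + ∑ᶠ e : K, χ (Module.jacobson E P) {L | k.cls L = e}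
  have hoff : ∀ e ≠ k.cls P,
      χ P {L | k.cls L = e} = χ (Module.jacobson E P) {L | k.cls L = e} := fun e he => by
    rw [hembed P, ← k.setOf_cls_eq_eq_image_map fun L hL =>
      Module.le_jacobson_of_ne_top_of_projective hindec fun hL' =>
        he (hL.symm.trans (hL' ▸ k.cls_top))]
  have key := finsum_add_eq_add_finsum_of_eq_of_ne
    (k.finite_range_cls.subset (k.support_subset_range_cls _ (hempty _))) hoff
  rwa [k.setOf_cls_eq_cls_eq_empty (Module.jacobson_lt_top E P).ne, hempty, add_zero,
    k.setOf_cls_eq_cls_eq_singleton_top, hsingle] at key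

/-- Let `E` be a finite-dimensional `ℂ`-algebra and `P` an indecomposable
projective `E`-module.  Then `ρ(P) = 1 + ρ(rad P)`, where `ρ(M) = Σ_e χ(Gr_e(M))`, the sum
over `e ∈ K₀(mod E)` of the Euler characteristics of the submodule Grassmannians.
The Euler characteristic with compact support `χ` is abstracted as a function on sets of
submodules satisfying its standard properties: `χ(∅) = 0`, `χ(point) = 1`, and invariance
under the canonical identification of submodules of a submodule `N' ⊆ N` with submodules
of `N` contained in `N'`. -/
theorem stmt_6 {E : Type} [Ring E] [Algebra ℂ E] [FiniteDimensional ℂ E]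
    {P : Type} [AddCommGroup P] [Module E P] [Module ℂ P] [IsScalarTower ℂ E P]
    [FiniteDimensional ℂ P] [Nontrivial P]
    [Module.Projective E P]
    (hindec : ∀ N N' : Submodule E P, IsCompl N N' → N = ⊥ ∨ N = ⊤)
    {K : Type} [AddCommGroup K] (k : K0Like E K)
    (χ : ∀ (N : Type) [AddCommGroup N] [Module E N], Set (Submodule E N) → ℤ)
    (hempty : ∀ (N : Type) [AddCommGroup N] [Module E N], χ N (∅ : Set (Submodule E N)) = 0)
    (hsingle : ∀ (N : Type) [AddCommGroup N] [Module E N] (x : Submodule E N), χ N {x} = 1)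
    (hembed : ∀ (N : Type) [AddCommGroup N] [Module E N] (N' : Submodule E N)
      (S : Set (Submodule E N')),
      χ N' S = χ N ((fun L => Submodule.map N'.subtype L) '' S)) :
    (∑ᶠ e : K, χ P {L : Submodule E P | k.cls L = e}) =
      1 + ∑ᶠ e : K, χ (↥(sInf {m : Submodule E P | IsCoatom m}))
            {L : Submodule E (↥(sInf {m : Submodule E P | IsCoatom m})) |
              k.cls L = e} :=
  stmt_6_general hindec k χ hempty hsingle hembed
end

section
/- Let C be a triangulated category, R ⊆ C a rigid functorially finite subcategory, and G : C → Mod R the functor c ↦ C(−, Σc)|_R. For any module M admitting a projective presentation P_{r₁} → P_{r₀} → M → 0 with r₀, r₁ ∈ R, there exists an object z in (Σ⁻¹R) * R with Gz ≅ M. -/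
open CategoryTheory

section
variable {C : Type*} [Category C] [Preadditive C] [Linear ℂ C] [HasShift C ℤ]
  (R : Set C)

/-- The full subcategory on a set `R` of objects of `C`. -/
abbrev Subcat := ObjectProperty.FullSubcategory (fun x : C => x ∈ R)

/-- The category `Mod R` of `ℂ`-linear contravariant functors `R → Mod ℂ`. -/
abbrev ModR := (Subcat R)ᵒᵖ ⥤ ModuleCat ℂ

/-- The functor `G : C → Mod R`, `c ↦ C(−, Σc)|_R`. -/
@[simps]
noncomputable def Gfun : C ⥤ ModR R where
  obj c :=
    { obj := fun r => ModuleCat.of ℂ (r.unop.obj ⟶ c⟦(1 : ℤ)⟧)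
      map := fun {r r'} f => ModuleCat.ofHom (Linear.leftComp ℂ (c⟦(1 : ℤ)⟧) f.unop.hom)
      map_id := fun r => by ext g; exact Category.id_comp g
      map_comp := fun {r r' r''} f g => by ext h; exact Category.assoc _ _ _ }
  map {c c'} f :=
    { app := fun r => ModuleCat.ofHom (Linear.rightComp ℂ _ (f⟦(1 : ℤ)⟧'))
      naturality := fun {r r'} g => by ext h; exact Category.assoc _ _ _ }
  map_id c := by
    apply NatTrans.ext; funext r; ext h
    simp [Linear.rightComp]
  map_comp {c c' c''} f g := by
    apply NatTrans.ext; funext r; ext h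
    simp only [Linear.rightComp, Functor.map_comp]
    exact (Category.assoc _ _ _).symm

end

/-!
Since `Σ(Σ⁻¹r₁) ≅ r₁ ∈ R`, the module `G(Σ⁻¹r₁)` is representable, so by Yoneda and the full
faithfulness of `Σ` the presentation map is `d = Gψ` for some `ψ : Σ⁻¹r₁ ⟶ Σ⁻¹r₀`. Complete `ψ`
to a triangle `Σ⁻¹r₁ ⟶ Σ⁻¹r₀ ⟶ z ⟶ r₁`; its rotation `Σ⁻¹r₀ ⟶ z ⟶ r₁ ⟶ r₀` shows
`z ∈ (Σ⁻¹R) * R`. As `G` is homological, `G(Σ⁻¹r₁) ⟶ G(Σ⁻¹r₀) ⟶ Gz ⟶ Gr₁` is exact, and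
`Gr₁ = 0` by rigidity, so `Gz` is the cokernel of `d`, which is `M`.
-/

open Pretriangulated

lemma LinearMap.exists_linearEquiv_comp_eq_of_ker_eq {K A B M : Type*} [Ring K]
    [AddCommGroup A] [AddCommGroup B] [AddCommGroup M] [Module K A] [Module K B] [Module K M]
    (c : A →ₗ[K] B) (π : A →ₗ[K] M) (hc : Function.Surjective c) (hπ : Function.Surjective π)
    (hker : LinearMap.ker c = LinearMap.ker π) :
    ∃ e : B ≃ₗ[K] M, ∀ a, e (c a) = π a :=
  ⟨(c.quotKerEquivOfSurjective hc).symm ≪≫ₗ Submodule.quotEquivOfEq _ _ hker ≪≫ₗ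
      π.quotKerEquivOfSurjective hπ,
    fun a => by simp [LinearMap.quotKerEquivOfSurjective_symm_apply]⟩

lemma nonempty_iso_of_surjective_of_ker_eq {J K : Type*} [Category J] [Ring K]
    {F G M : J ⥤ ModuleCat K} (c : F ⟶ G) (π : F ⟶ M)
    (hc : ∀ j, Function.Surjective (c.app j)) (hπ : ∀ j, Function.Surjective (π.app j))
    (hker : ∀ j, LinearMap.ker (c.app j).hom = LinearMap.ker (π.app j).hom) :
    Nonempty (G ≅ M) := by
  choose e he using fun j =>
    LinearMap.exists_linearEquiv_comp_eq_of_ker_eq _ _ (hc j) (hπ j) (hker j)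
  refine ⟨NatIso.ofComponents (fun j => (e j).toModuleIso) fun {i j} f => ?_⟩
  ext x
  obtain ⟨a, rfl⟩ := hc i x
  simp [← NatTrans.naturality_apply, he]

section
variable {C : Type*} [Category C] [Preadditive C] [Linear ℂ C] [HasShift C ℤ] (R : Set C)

lemma exists_Gfun_map_eq {X Y r : C} (hr : r ∈ R) (e : X⟦(1 : ℤ)⟧ ≅ r)
    (d : (Gfun R).obj X ⟶ (Gfun R).obj Y) : ∃ ψ : X ⟶ Y, (Gfun R).map ψ = d := by
  -- `G X ≅ R(−, r)` is representable, so by Yoneda `d` is determined by `d(e⁻¹)`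
  refine ⟨(shiftFunctor C (1 : ℤ)).preimage (e.hom ≫ d.app (.op ⟨r, hr⟩) e.inv), ?_⟩
  ext r' (x : r'.unop.obj ⟶ X⟦(1 : ℤ)⟧)
  change x ≫ (shiftFunctor C (1 : ℤ)).map (Functor.preimage _ _) = d.app r' x
  have hnat : d.app r' ((x ≫ e.hom) ≫ e.inv) = (x ≫ e.hom) ≫ d.app (.op ⟨r, hr⟩) e.inv :=
    NatTrans.naturality_apply d (ObjectProperty.homMk (x ≫ e.hom) : r'.unop ⟶ ⟨r, hr⟩).op e.inv
  rw [Category.assoc, e.hom_inv_id, Category.comp_id] at hnat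
  rw [Functor.map_preimage]
  exact (hnat.trans (Category.assoc _ _ _)).symm

variable [Limits.HasZeroObject C] [∀ n : ℤ, (shiftFunctor C n).Additive] [Pretriangulated C]

lemma Gfun_range_map_mor₁_eq_ker {T : Triangle C} (hT : T ∈ distTriang C) (r : (Subcat R)ᵒᵖ) :
    LinearMap.range (((Gfun R).map T.mor₁).app r).hom =
      LinearMap.ker (((Gfun R).map T.mor₂).app r).hom := by
  ext (x : r.unop.obj ⟶ T.obj₂⟦(1 : ℤ)⟧)
  constructor
  · rintro ⟨(y : r.unop.obj ⟶ T.obj₁⟦(1 : ℤ)⟧), rfl⟩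
    change (y ≫ T.mor₁⟦(1 : ℤ)⟧') ≫ T.mor₂⟦(1 : ℤ)⟧' = 0
    rw [Category.assoc, ← Functor.map_comp, comp_distTriang_mor_zero₁₂ T hT, Functor.map_zero,
      Limits.comp_zero]
  · intro (hx : x ≫ T.mor₂⟦(1 : ℤ)⟧' = 0)
    -- the third rotation of `T` is `T⟦1⟧` with all three morphisms negated
    have hT₃ := rot_of_distTriang _ (rot_of_distTriang _ (rot_of_distTriang _ hT))
    obtain ⟨y, hy⟩ := Triangle.coyoneda_exact₂ _ hT₃ x
      (show x ≫ (-(T.mor₂⟦(1 : ℤ)⟧')) = 0 by rw [Preadditive.comp_neg, hx, neg_zero])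
    exact ⟨-y, show (-y) ≫ T.mor₁⟦(1 : ℤ)⟧' = x by
      rw [hy]; exact (Preadditive.neg_comp _ _).trans (Preadditive.comp_neg _ _).symm⟩

end

namespace CategoryTheory.Pretriangulated

lemma Triangle.mk_comp_iso_distinguished {C : Type*} [Category C] [Preadditive C]
    [Limits.HasZeroObject C] [HasShift C ℤ] [∀ n : ℤ, (CategoryTheory.shiftFunctor C n).Additive]
    [Pretriangulated C] {X Y Z Z' : C} (f : X ⟶ Y) (g : Y ⟶ Z) (h : Z ⟶ X⟦(1 : ℤ)⟧) (e : Z ≅ Z')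
    (hT : Triangle.mk f g h ∈ distTriang C) : Triangle.mk f (g ≫ e.hom) (e.inv ≫ h) ∈ distTriang C :=
  isomorphic_distinguished _ hT _ (Triangle.isoMk _ _ (Iso.refl _) (Iso.refl _) e.symm
    (by simp [Triangle.mk]) (by simp [Triangle.mk]) (by simp [Triangle.mk]))

end CategoryTheory.Pretriangulated

/-- Let `C` be a (pretriangulated) triangulated category, `R ⊆ C` a rigid
functorially finite subcategory (closed under sums and summands), and
`G : C → Mod R`, `c ↦ C(−, Σc)|_R`.  Every module `M` admitting a projective presentation
`P_{r₁} → P_{r₀} → M → 0` (with `P_r = R(−,r) = G(Σ⁻¹ r)`, `r₀, r₁ ∈ R`) is isomorphic to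
`G z` for some `z` in `(Σ⁻¹ R) * R`, i.e. some `z` fitting into a distinguished triangle
`Σ⁻¹ r₀' → z → r₁'` with `r₀', r₁' ∈ R`. -/
theorem stmt_9 {C : Type*} [Category C] [Preadditive C] [Linear ℂ C]
    [Limits.HasZeroObject C] [HasShift C ℤ]
    [∀ n : ℤ, (CategoryTheory.shiftFunctor C n).Additive] [Pretriangulated C]
    (R : Set C)
    (hrigid : ∀ r r' : C, r ∈ R → r' ∈ R → ∀ f : r ⟶ r'⟦(1 : ℤ)⟧, f = 0)
    (M : ModR R)
    (r₀ r₁ : C) (h₀ : r₀ ∈ R) (h₁ : r₁ ∈ R)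
    (π : (Gfun R).obj (r₀⟦(-1 : ℤ)⟧) ⟶ M)
    (d : (Gfun R).obj (r₁⟦(-1 : ℤ)⟧) ⟶ (Gfun R).obj (r₀⟦(-1 : ℤ)⟧))
    (hπ : ∀ r, Function.Surjective (π.app r))
    (hexact : ∀ r, LinearMap.range (d.app r).hom = LinearMap.ker (π.app r).hom) :
    ∃ (z : C) (r₀' r₁' : C) (_ : r₀' ∈ R) (_ : r₁' ∈ R)
      (g : r₀'⟦(-1 : ℤ)⟧ ⟶ z) (h : z ⟶ r₁') (w : r₁' ⟶ (r₀'⟦(-1 : ℤ)⟧)⟦(1 : ℤ)⟧),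
      Pretriangulated.Triangle.mk g h w ∈ (Pretriangulated.distinguishedTriangles (C := C)) ∧
      Nonempty ((Gfun R).obj z ≅ M) := by
  let ε : (r₁⟦(-1 : ℤ)⟧)⟦(1 : ℤ)⟧ ≅ r₁ := (shiftFunctorCompIsoId C (-1) 1 (by norm_num)).app r₁
  obtain ⟨ψ, rfl⟩ := exists_Gfun_map_eq R h₁ ε d
  obtain ⟨z, g, w, hT⟩ := distinguished_cocone_triangle ψ
  have hT' := Triangle.mk_comp_iso_distinguished g w (-(ψ⟦(1 : ℤ)⟧')) ε (rot_of_distTriang _ hT)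
  refine ⟨z, r₀, r₁, h₀, h₁, g, w ≫ ε.hom, ε.inv ≫ (-(ψ⟦(1 : ℤ)⟧')), hT', ?_⟩
  refine nonempty_iso_of_surjective_of_ker_eq ((Gfun R).map g) π (fun r => ?_) hπ
    fun r => (Gfun_range_map_mor₁_eq_ker R hT r).symm.trans (hexact r)
  -- `G r₁` vanishes on `R` by rigidity, so `G g` is onto
  have hG₁ : LinearMap.ker (((Gfun R).map (w ≫ ε.hom)).app r).hom = ⊤ :=
    eq_top_iff.mpr fun x _ => hrigid _ _ r.unop.property h₁ _
  exact LinearMap.range_eq_top.mp ((Gfun_range_map_mor₁_eq_ker R hT' r).trans hG₁)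
end

section
/- Let C be a triangulated category, R a rigid functorially finite subcategory, G(c) = C(−, Σc)|_R. For z ∈ (Σ⁻¹R) * R and any c ∈ C, the map C(z, c) → Hom_{Mod R}(Gz, Gc) induced by G is surjective. -/
open CategoryTheory

/-!
For `X` with `X⟦1⟧ ≅ r ∈ R`, the module `G X` is represented by `r`, so by Yoneda every
`G X ⟶ G c` comes from a morphism `X ⟶ c`. Given `η : G z ⟶ G c`, lift `G g ≫ η` to
`a : r₀⟦-1⟧ ⟶ c`. Evaluating at `w ∈ (G r₀⟦-1⟧)(r₁)`, which `G g` kills, gives `w ≫ a⟦1⟧ = 0`,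
so `a = g ≫ f` for some `f : z ⟶ c`. By rigidity every `r → z⟦1⟧` with `r ∈ R` vanishes when
composed to `r₁⟦1⟧`, hence factors through `g⟦1⟧`: `G g` is an epimorphism, and
`G g ≫ G f = G g ≫ η` gives `G f = η`.
-/

open CategoryTheory Pretriangulated

namespace CategoryTheory.Pretriangulated.Triangle

variable {C : Type*} [Category C] [Preadditive C] [Limits.HasZeroObject C] [HasShift C ℤ]
  [∀ n : ℤ, (CategoryTheory.shiftFunctor C n).Additive] [Pretriangulated C]

lemma yoneda_exact₁ (T : Triangle C) (hT : T ∈ distTriang C) {X : C}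
    (f : T.obj₁ ⟶ X) (hf : T.mor₃ ≫ f⟦(1 : ℤ)⟧' = 0) : ∃ g, f = T.mor₁ ≫ g := by
  refine T.invRotate.yoneda_exact₂ (inv_rot_of_distTriang T hT) f ?_
  have hnat := (shiftFunctorCompIsoId C (1 : ℤ) (-1) (by norm_num)).hom.naturality f
  dsimp at hnat
  -- restate with `T.invRotate.obj₁` unfolded, so that the rewrites below typecheck
  show (-(T.mor₃⟦(-1 : ℤ)⟧') ≫ (shiftFunctorCompIsoId C (1 : ℤ) (-1) (by norm_num)).hom.app T.obj₁)
    ≫ f = (0 : T.obj₃⟦(-1 : ℤ)⟧ ⟶ X)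
  simp only [Category.assoc, ← hnat, Preadditive.neg_comp, ← Functor.map_comp_assoc, hf,
    Functor.map_zero, Limits.zero_comp, neg_zero]

end CategoryTheory.Pretriangulated.Triangle

section

variable {C : Type*} [Category C] [Preadditive C] [Linear ℂ C] [HasShift C ℤ] (R : Set C)

lemma Gfun_obj_map_apply {X : C} {r r' : (Subcat R)ᵒᵖ} (φ : r ⟶ r') (x : r.unop.obj ⟶ X⟦(1 : ℤ)⟧) :
    ((Gfun R).obj X).map φ x = φ.unop.hom ≫ x :=
  rfl

lemma Gfun_map_app_apply {X Y : C} (b : X ⟶ Y) (r : (Subcat R)ᵒᵖ) (x : r.unop.obj ⟶ X⟦(1 : ℤ)⟧) :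
    ((Gfun R).map b).app r x = x ≫ b⟦(1 : ℤ)⟧' :=
  rfl

section Yoneda

variable {R} {X r : C} (hr : r ∈ R) (e : r ≅ X⟦(1 : ℤ)⟧)
include hr e

lemma Gfun_hom_ext {F : ModR R} {ψ ψ' : (Gfun R).obj X ⟶ F}
    (h : ψ.app (.op ⟨r, hr⟩) e.hom = ψ'.app (.op ⟨r, hr⟩) e.hom) : ψ = ψ' := by
  ext r' (x : r'.unop.obj ⟶ X⟦(1 : ℤ)⟧)
  let φ : r'.unop ⟶ ⟨r, hr⟩ := ObjectProperty.homMk (x ≫ e.inv)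
  have hx : ((Gfun R).obj X).map φ.op e.hom = x := by
    rw [Gfun_obj_map_apply]
    exact (Category.assoc _ _ _).trans ((congrArg (x ≫ ·) e.inv_hom_id).trans (Category.comp_id x))
  let gen : ((Gfun R).obj X).obj (.op ⟨r, hr⟩) := e.hom
  rw [← hx]
  exact (NatTrans.naturality_apply ψ φ.op gen).trans
    ((congrArg _ h).trans (NatTrans.naturality_apply ψ' φ.op gen).symm)

lemma Gfun_map_surjective_of_shift_iso (c : C) :
    Function.Surjective (fun b : X ⟶ c => (Gfun R).map b) := by
  intro ψ
  refine ⟨(shiftFunctor C (1 : ℤ)).preimage (e.inv ≫ ψ.app (.op ⟨r, hr⟩) e.hom), ?_⟩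
  apply Gfun_hom_ext hr e
  exact (congrArg (e.hom ≫ ·) (Functor.map_preimage _ _)).trans (e.hom_inv_id_assoc _)

end Yoneda

variable [Limits.HasZeroObject C] [∀ n : ℤ, (shiftFunctor C n).Additive] [Pretriangulated C]

lemma Gfun_map_mor₁_app_surjective (T : Triangle C) (hT : T ∈ distTriang C)
    (r : (Subcat R)ᵒᵖ) (hr : ∀ f : r.unop.obj ⟶ T.obj₃⟦(1 : ℤ)⟧, f = 0) :
    Function.Surjective (((Gfun R).map T.mor₁).app r) := by
  intro x
  obtain ⟨y, hy⟩ := Triangle.coyoneda_exact₃ _ (rot_of_distTriang _ (rot_of_distTriang _ hT)) x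
    (hr _)
  refine ⟨-y, (Gfun_map_app_apply R T.mor₁ r (-y)).trans ?_⟩
  rw [hy]
  exact (Preadditive.neg_comp _ _).trans (Preadditive.comp_neg _ _).symm

lemma epi_Gfun_map_mor₁ (T : Triangle C) (hT : T ∈ distTriang C)
    (hR : ∀ r ∈ R, ∀ f : r ⟶ T.obj₃⟦(1 : ℤ)⟧, f = 0) : Epi ((Gfun R).map T.mor₁) := by
  have (r : (Subcat R)ᵒᵖ) : Epi (((Gfun R).map T.mor₁).app r) :=
    (ModuleCat.epi_iff_surjective _).2
      (Gfun_map_mor₁_app_surjective R T hT r (hR _ r.unop.property))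
  exact NatTrans.epi_of_epi_app _

end

/-- Let `C` be a (pretriangulated) triangulated category, `R` a rigid
functorially finite subcategory, and `G(c) = C(−, Σc)|_R`.  For `z ∈ (Σ⁻¹R) * R` (i.e. `z`
sits in a distinguished triangle `Σ⁻¹r₀ → z → r₁` with `r₀, r₁ ∈ R`) and any `c ∈ C`, the
map `C(z, c) → Hom_{Mod R}(Gz, Gc)` induced by `G` is surjective. -/
theorem stmt_10 {C : Type*} [Category C] [Preadditive C] [Linear ℂ C]
    [Limits.HasZeroObject C] [HasShift C ℤ]
    [∀ n : ℤ, (CategoryTheory.shiftFunctor C n).Additive] [Pretriangulated C]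
    (R : Set C)
    (hrigid : ∀ r r' : C, r ∈ R → r' ∈ R → ∀ f : r ⟶ r'⟦(1 : ℤ)⟧, f = 0)
    (z : C) (r₀ r₁ : C) (h₀ : r₀ ∈ R) (h₁ : r₁ ∈ R)
    (g : r₀⟦(-1 : ℤ)⟧ ⟶ z) (h : z ⟶ r₁) (w : r₁ ⟶ (r₀⟦(-1 : ℤ)⟧)⟦(1 : ℤ)⟧)
    (hdist : Pretriangulated.Triangle.mk g h w ∈
      (Pretriangulated.distinguishedTriangles (C := C)))
    (c : C) :
    Function.Surjective (fun f : z ⟶ c => (Gfun R).map f) := by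
  intro η
  obtain ⟨a, ha : (Gfun R).map a = (Gfun R).map g ≫ η⟩ := Gfun_map_surjective_of_shift_iso h₀
    ((shiftFunctorCompIsoId C (-1 : ℤ) 1 (by norm_num)).app _).symm c ((Gfun R).map g ≫ η)
  have hwa : w ≫ a⟦(1 : ℤ)⟧' = 0 := by
    let r : (Subcat R)ᵒᵖ := .op ⟨r₁, h₁⟩
    have hwg : ((Gfun R).map g).app r w = 0 :=
      (Gfun_map_app_apply R g r w).trans (comp_distTriang_mor_zero₃₁ _ hdist)
    have hw : ((Gfun R).map a).app r w = 0 := by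
      rw [ha]
      exact (congrArg (η.app r) hwg).trans (map_zero _)
    exact (Gfun_map_app_apply R a r w).symm.trans hw
  obtain ⟨f, rfl⟩ := Triangle.yoneda_exact₁ _ hdist a hwa
  have : Epi ((Gfun R).map g) :=
    epi_Gfun_map_mor₁ R _ hdist (fun r hr => hrigid r r₁ hr h₁)
  exact ⟨f, (cancel_epi ((Gfun R).map g)).1 ((Functor.map_comp _ _ _).symm.trans ha)⟩
end

section
/- Define integers m_R(i,j) for a polygon dissection R of the (n+3)-gon P by: m_R(i,i)=0; m_R(i,j)=1 if j lies in a piece of the dissection containing i; and m_R(i,j) = m_R(i,k) + m_R(i,ℓ) whenever (k,ℓ) is a diagonal of R bounding a piece containing j, with the values at k,ℓ already defined. Then m_R is symmetric: m_R(i,j) = m_R(j,i) for all vertices i, j of P. -/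
/-- `x` lies strictly between `a` and `b` in the cyclic order on the vertices
`ZMod m` of a convex `m`-gon. -/
def StrBtw (m : ℕ) [NeZero m] (a x b : ZMod m) : Prop :=
  (x - a).val ≠ 0 ∧ (x - a).val < (b - a).val

/-- Two chords of the `m`-gon (given by their pairs of endpoints) cross:
the endpoints of one strictly separate the endpoints of the other. -/
def Crosses (m : ℕ) [NeZero m] (d d' : ZMod m × ZMod m) : Prop :=
  (StrBtw m d.1 d'.1 d.2 ∧ StrBtw m d.2 d'.2 d.1) ∨
  (StrBtw m d.1 d'.2 d.2 ∧ StrBtw m d.2 d'.1 d.1)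

/-!
`m_R(i, j)` equals the number of sets of pairwise vertex-disjoint diagonals of `R` crossed by the
chord `(i, j)`, a quantity that is visibly symmetric in `i` and `j`. This is proved by induction on
the number of crossed diagonals. Let `(k, l)` be the diagonal bounding the piece of `j` on the side
of `i`. The diagonals crossed by `(i, k)` are those crossed by `(i, j)` that avoid `k`, and likewise
for `l`; moreover two crossed diagonals through `l` and through `k` would cross each other unless one
of them is `(k, l)`. Splitting the vertex-disjoint sets according to whether they contain `(k, l)`
and using inclusion–exclusion, the count obeys the same recursion `m(i, j) = m(i, k) + m(i, l)`.
-/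

open Finset

section Matchings

variable {α : Type*}

def IsMatching (T : Finset (Sym2 α)) : Prop :=
  ∀ e ∈ T, ∀ e' ∈ T, ∀ x ∈ e, x ∈ e' → e = e'

open scoped Classical in
noncomputable def matchings (S : Finset (Sym2 α)) : Finset (Finset (Sym2 α)) :=
  S.powerset.filter (IsMatching (α := α))

theorem mem_matchings {S T : Finset (Sym2 α)} : T ∈ matchings S ↔ T ⊆ S ∧ IsMatching T := by
  simp only [matchings, mem_filter, mem_powerset]

theorem matchings_empty : matchings (∅ : Finset (Sym2 α)) = {∅} := by
  ext T
  simp only [mem_matchings, subset_empty, mem_singleton]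
  exact ⟨And.left, fun h => ⟨h, by simp [h, IsMatching]⟩⟩

variable [DecidableEq α]

theorem matchings_inter (S S' : Finset (Sym2 α)) :
    matchings (S ∩ S') = matchings S ∩ matchings S' := by
  ext T
  simp only [mem_inter, mem_matchings, subset_inter_iff]
  tauto

variable {S : Finset (Sym2 α)} {k l : α}

theorem card_filter_mem_matchings (h : s(k, l) ∈ S) :
    #{T ∈ matchings S | s(k, l) ∈ T} = #(matchings ({e ∈ S | k ∉ e} ∩ {e ∈ S | l ∉ e})) := by
  refine card_nbij' (fun T => T.erase s(k, l)) (insert s(k, l)) ?_ ?_ ?_ ?_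
  · intro T hT
    simp only [coe_filter, Set.mem_ofPred_eq, mem_matchings] at hT
    obtain ⟨⟨hTS, hT⟩, hkl⟩ := hT
    simp only [mem_coe, mem_matchings]
    refine ⟨fun e he => ?_, fun e he e' he' => hT e (mem_of_mem_erase he) e' (mem_of_mem_erase he')⟩
    obtain ⟨hne, he⟩ := mem_erase.1 he
    have hdisj (x) (hx : x ∈ s(k, l)) : x ∉ e := fun hxe => hne (hT _ he _ hkl x hxe hx)
    simp [hTS he, hdisj k (Sym2.mem_mk_left k l), hdisj l (Sym2.mem_mk_right k l)]
  · intro T hT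
    simp only [mem_coe, mem_matchings, subset_inter_iff] at hT
    obtain ⟨⟨hTk, hTl⟩, hT⟩ := hT
    simp only [coe_filter, Set.mem_ofPred_eq, mem_matchings, mem_insert_self, and_true]
    refine ⟨insert_subset h fun e he => (mem_filter.1 (hTk he)).1, ?_⟩
    have hdisj (e) (he : e ∈ T) (x) (hx : x ∈ s(k, l)) : x ∉ e := by
      rw [Sym2.mem_iff] at hx
      rcases hx with rfl | rfl
      exacts [(mem_filter.1 (hTk he)).2, (mem_filter.1 (hTl he)).2]
    intro e he e' he' x hx hx'
    rcases mem_insert.1 he with rfl | he <;> rcases mem_insert.1 he' with rfl | he'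
    · rfl
    · exact absurd hx' (hdisj e' he' x hx)
    · exact absurd hx (hdisj e he x hx')
    · exact hT e he e' he' x hx hx'
  · intro T hT
    exact insert_erase (mem_filter.1 hT).2
  · intro T hT
    simp only [mem_coe, mem_matchings, subset_inter_iff] at hT
    exact erase_insert fun hkl => (mem_filter.1 (hT.1.1 hkl)).2 (Sym2.mem_mk_left k l)

theorem filter_notMem_matchings
    (hconf : ∀ y z, s(l, y) ∈ S → s(k, z) ∈ S → y = k ∨ z = l) :
    {T ∈ matchings S | s(k, l) ∉ T} = matchings {e ∈ S | k ∉ e} ∪ matchings {e ∈ S | l ∉ e} := by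
  ext T
  simp only [mem_filter, mem_union, mem_matchings, subset_iff]
  constructor
  · rintro ⟨⟨hTS, hT⟩, hkl⟩
    by_cases hk : ∃ e' ∈ T, k ∈ e'
    swap
    · exact .inl ⟨fun e he => ⟨hTS he, fun hke => hk ⟨e, he, hke⟩⟩, hT⟩
    obtain ⟨e', he', hke'⟩ := hk
    refine .inr ⟨fun e he => ⟨hTS he, fun hle => ?_⟩, hT⟩
    obtain ⟨y, rfl⟩ := Sym2.mem_iff_exists.1 hle
    obtain ⟨z, rfl⟩ := Sym2.mem_iff_exists.1 hke'
    rcases hconf y z (hTS he) (hTS he') with rfl | rfl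
    · exact hkl (Sym2.eq_swap ▸ he)
    · exact hkl he'
  · rintro (⟨hTS, hT⟩ | ⟨hTS, hT⟩)
    · exact ⟨⟨fun e he => (hTS he).1, hT⟩, fun hkl => (hTS hkl).2 (Sym2.mem_mk_left k l)⟩
    · exact ⟨⟨fun e he => (hTS he).1, hT⟩, fun hkl => (hTS hkl).2 (Sym2.mem_mk_right k l)⟩

theorem card_matchings_eq_add (h : s(k, l) ∈ S)
    (hconf : ∀ y z, s(l, y) ∈ S → s(k, z) ∈ S → y = k ∨ z = l) :
    #(matchings S) = #(matchings {e ∈ S | k ∉ e}) + #(matchings {e ∈ S | l ∉ e}) := by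
  rw [← card_filter_add_card_filter_not (s(k, l) ∈ ·), card_filter_mem_matchings h,
    filter_notMem_matchings hconf, matchings_inter, add_comm, card_union_add_card_inter]

end Matchings

theorem ZMod.val_sub_eq_ite {N : ℕ} [NeZero N] (a b : ZMod N) :
    (a - b).val = if b.val ≤ a.val then a.val - b.val else a.val + N - b.val := by
  split_ifs with h
  · exact ZMod.val_sub h
  · have hb : NeZero b := ⟨by rintro rfl; simp at h⟩
    have hbN := ZMod.val_lt b
    rw [sub_eq_add_neg, ZMod.val_add, ZMod.val_neg_of_ne_zero, Nat.mod_eq_of_lt (by omega)]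
    omega

theorem ZMod.val_sub_right_inj {N : ℕ} [NeZero N] {x y : ZMod N} (c : ZMod N) :
    (x - c).val = (y - c).val ↔ x = y :=
  ZMod.val_injective N |>.eq_iff.trans sub_left_inj

section Crossing

variable {N : ℕ} [NeZero N]

instance : DecidableRel (Crosses N) := fun _ _ => by
  unfold Crosses StrBtw; infer_instance

theorem crosses_swap_left (a b : ZMod N) (d : ZMod N × ZMod N) :
    Crosses N (a, b) d ↔ Crosses N (b, a) d := by
  unfold Crosses; tauto

theorem crosses_swap_right (d : ZMod N × ZMod N) (u v : ZMod N) :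
    Crosses N d (u, v) ↔ Crosses N d (v, u) := by
  unfold Crosses; exact or_comm

theorem crosses_iff_val_sub (c a b u v : ZMod N) :
    Crosses N (a, b) (u, v) ↔
      (min (a - c).val (b - c).val < (u - c).val ∧ (u - c).val < max (a - c).val (b - c).val ∧
        ((v - c).val < min (a - c).val (b - c).val ∨ max (a - c).val (b - c).val < (v - c).val)) ∨
      (min (a - c).val (b - c).val < (v - c).val ∧ (v - c).val < max (a - c).val (b - c).val ∧
        ((u - c).val < min (a - c).val (b - c).val ∨ max (a - c).val (b - c).val < (u - c).val)) := by
  have key (x y : ZMod N) : (x - y).val = if (y - c).val ≤ (x - c).val then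
      (x - c).val - (y - c).val else (x - c).val + N - (y - c).val := by
    rw [← ZMod.val_sub_eq_ite, sub_sub_sub_cancel_right]
  have := ZMod.val_lt (a - c); have := ZMod.val_lt (b - c)
  have := ZMod.val_lt (u - c); have := ZMod.val_lt (v - c)
  unfold Crosses StrBtw
  rw [key u a, key b a, key v b, key a b, key v a, key u b]
  split_ifs <;> omega

theorem crosses_vertex_iff (c t u v : ZMod N) :
    Crosses N (c, t) (u, v) ↔
      0 < (u - c).val ∧ (u - c).val < (t - c).val ∧ (t - c).val < (v - c).val ∨
      0 < (v - c).val ∧ (v - c).val < (t - c).val ∧ (t - c).val < (u - c).val := by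
  rw [crosses_iff_val_sub c, sub_self, ZMod.val_zero]
  omega

theorem ne_of_crosses {a b u v : ZMod N} (h : Crosses N (a, b) (u, v)) : u ≠ a ∧ v ≠ a := by
  rw [crosses_iff_val_sub a] at h
  constructor <;> rintro rfl <;> simp at h

variable {D : Finset (ZMod N × ZMod N)}

theorem exists_boundary_diagonal (hnc : ∀ d ∈ D, ∀ d' ∈ D, ¬ Crosses N d d') {i j : ZMod N}
    (h : ∃ d ∈ D, Crosses N (i, j) d) :
    ∃ k l, (k, l) ∈ D ∧ Crosses N (i, j) (k, l) ∧
      (∀ d ∈ D, ¬ Crosses N (j, k) d) ∧ ∀ d ∈ D, ¬ Crosses N (j, l) d := by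
  obtain ⟨⟨k, l⟩, hkl, hmax⟩ := (D.filter (Crosses N (i, j))).exists_max_image
    (fun d => max (d.1 - j).val (d.2 - j).val - min (d.1 - j).val (d.2 - j).val)
    (by simpa [Finset.Nonempty] using h)
  obtain ⟨hklD, hcross⟩ := mem_filter.1 hkl
  -- `(k, l)` is the crossed diagonal of widest span seen from `j`, i.e. the one nearest to `j`.
  have huncrossed (x : ZMod N) (hx : x = k ∨ x = l) : ∀ d ∈ D, ¬ Crosses N (j, x) d := by
    rintro ⟨u, v⟩ hd hcr
    have hwider := hmax (u, v)
    have hukl := hnc _ hd _ hklD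
    simp only [mem_filter, hd, true_and] at hwider
    simp only [crosses_iff_val_sub j, sub_self, ZMod.val_zero] at hwider hukl hcross hcr
    rcases hx with rfl | rfl <;> omega
  exact ⟨k, l, hklD, hcross, huncrossed k (.inl rfl), huncrossed l (.inr rfl)⟩

variable (D) in
def crossedDiagonals (a b : ZMod N) : Finset (Sym2 (ZMod N)) :=
  (D.filter (Crosses N (a, b))).image fun d => s(d.1, d.2)

theorem crossedDiagonals_comm (a b : ZMod N) :
    crossedDiagonals D a b = crossedDiagonals D b a := by
  unfold crossedDiagonals
  congr 1
  exact filter_congr fun d _ => crosses_swap_left a b d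

theorem mk_mem_crossedDiagonals {a b u v : ZMod N} (hd : (u, v) ∈ D)
    (h : Crosses N (a, b) (u, v)) : s(u, v) ∈ crossedDiagonals D a b :=
  mem_image_of_mem _ (mem_filter.2 ⟨hd, h⟩)

theorem crossedDiagonals_eq_empty {a b : ZMod N} (h : ∀ d ∈ D, ¬ Crosses N (a, b) d) :
    crossedDiagonals D a b = ∅ := by
  simpa [crossedDiagonals, filter_eq_empty_iff] using h

section BoundaryDiagonal

variable {i j k l : ZMod N}

theorem crossedDiagonals_eq_filter_notMem (hkl : ∀ d ∈ D, ¬ Crosses N d (k, l))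
    (hcross : Crosses N (i, j) (k, l)) (hjk : ∀ d ∈ D, ¬ Crosses N (j, k) d) :
    crossedDiagonals D i k = (crossedDiagonals D i j).filter (k ∉ ·) := by
  rw [crossedDiagonals, crossedDiagonals, filter_image, filter_filter]
  congr 1
  refine filter_congr fun ⟨u, v⟩ hd => ?_
  have hukl := hkl _ hd
  have hujk := hjk _ hd
  simp only [Sym2.mem_iff, not_or, ← ZMod.val_sub_right_inj j,
    crosses_iff_val_sub j, sub_self, ZMod.val_zero] at hukl hujk hcross ⊢
  omega

theorem eq_or_eq_of_mem_crossedDiagonals (hnc : ∀ d ∈ D, ∀ d' ∈ D, ¬ Crosses N d d')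
    (hcross : Crosses N (i, j) (k, l)) (hjk : ∀ d ∈ D, ¬ Crosses N (j, k) d)
    (hjl : ∀ d ∈ D, ¬ Crosses N (j, l) d) {y z : ZMod N}
    (hy : s(l, y) ∈ crossedDiagonals D i j) (hz : s(k, z) ∈ crossedDiagonals D i j) :
    y = k ∨ z = l := by
  simp only [crossedDiagonals, mem_image, mem_filter] at hy hz
  obtain ⟨⟨u, v⟩, ⟨hd, hcr⟩, huv⟩ := hy
  obtain ⟨⟨u', v'⟩, ⟨hd', hcr'⟩, huv'⟩ := hz
  have hdd' := hnc _ hd _ hd'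
  have hjkd := hjk _ hd
  have hjld := hjl _ hd'
  rw [Sym2.eq_iff] at huv huv'
  rw [crosses_swap_left] at hcross hcr hcr'
  rw [crosses_iff_val_sub j] at hdd'
  simp only [crosses_vertex_iff] at hcross hcr hcr' hjkd hjld
  simp only [← ZMod.val_sub_right_inj j] at huv huv' ⊢
  omega

end BoundaryDiagonal

end Crossing

theorem eq_card_matchings_crossedDiagonals {N : ℕ} [NeZero N] {D : Finset (ZMod N × ZMod N)}
    (hnc : ∀ d ∈ D, ∀ d' ∈ D, ¬ Crosses N d d') {m : ZMod N → ZMod N → ℕ}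
    (hpiece : ∀ i j, i ≠ j → (∀ d ∈ D, ¬ Crosses N (i, j) d) → m i j = 1)
    (hrec : ∀ i j k l, (k, l) ∈ D → Crosses N (i, j) (k, l) →
      (∀ d ∈ D, ¬ Crosses N (j, k) d) → (∀ d ∈ D, ¬ Crosses N (j, l) d) →
      m i j = m i k + m i l)
    {i j : ZMod N} (hij : i ≠ j) : m i j = #(matchings (crossedDiagonals D i j)) := by
  induction hc : #(crossedDiagonals D i j) using Nat.strong_induction_on generalizing j with
  | _ c ih =>
  by_cases h : ∃ d ∈ D, Crosses N (i, j) d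
  · obtain ⟨k, l, hklD, hcross, hjk, hjl⟩ := exists_boundary_diagonal hnc h
    have hkl : ∀ d ∈ D, ¬ Crosses N d (k, l) := fun d hd => hnc d hd _ hklD
    have hCk := crossedDiagonals_eq_filter_notMem hkl hcross hjk
    have hCl := crossedDiagonals_eq_filter_notMem
      (fun d hd h => hkl d hd ((crosses_swap_right d k l).2 h))
      ((crosses_swap_right _ k l).1 hcross) hjl
    have hmem : s(k, l) ∈ crossedDiagonals D i j := mk_mem_crossedDiagonals hklD hcross
    have hlt (x : ZMod N) (hx : x ∈ s(k, l)) : #{e ∈ crossedDiagonals D i j | x ∉ e} < c :=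
      hc ▸ card_lt_card (filter_ssubset.2 ⟨_, hmem, not_not.2 hx⟩)
    rw [hrec i j k l hklD hcross hjk hjl,
      ih _ (hCk ▸ hlt k (Sym2.mem_mk_left k l)) (ne_of_crosses hcross).1.symm rfl,
      ih _ (hCl ▸ hlt l (Sym2.mem_mk_right k l)) (ne_of_crosses hcross).2.symm rfl, hCk, hCl,
      card_matchings_eq_add hmem fun y z hy hz =>
        eq_or_eq_of_mem_crossedDiagonals hnc hcross hjk hjl hy hz]
  · simp only [not_exists, not_and] at h
    rw [hpiece i j hij h, crossedDiagonals_eq_empty h, matchings_empty, card_singleton]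

theorem stmt_13_general (n : ℕ) (D : Finset (ZMod (n + 3) × ZMod (n + 3)))
    (hnoncross : ∀ d ∈ D, ∀ d' ∈ D, ¬ Crosses (n + 3) d d')
    (m : ZMod (n + 3) → ZMod (n + 3) → ℕ)
    (hpiece : ∀ i j, i ≠ j → (∀ d ∈ D, ¬ Crosses (n + 3) (i, j) d) → m i j = 1)
    (hrec : ∀ i j k l, (k, l) ∈ D → Crosses (n + 3) (i, j) (k, l) →
      (∀ d ∈ D, ¬ Crosses (n + 3) (j, k) d) → (∀ d ∈ D, ¬ Crosses (n + 3) (j, l) d) →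
      m i j = m i k + m i l) :
    ∀ i j, m i j = m j i := by
  intro i j
  rcases eq_or_ne i j with rfl | hij
  · rfl
  rw [eq_card_matchings_crossedDiagonals hnoncross hpiece hrec hij,
    eq_card_matchings_crossedDiagonals hnoncross hpiece hrec hij.symm, crossedDiagonals_comm]

/-- Let `D` be a polygon dissection of the `(n+3)`-gon `P` (a set of pairwise
non-crossing diagonals) and let `m : (i,j) ↦ m_R(i,j)` satisfy the defining rules:
`m(i,i) = 0`; `m(i,j) = 1` if `j ≠ i` lies in a piece of the dissection containing `i`
(i.e. `(i,j)` crosses no diagonal of `D`); and `m(i,j) = m(i,k) + m(i,ℓ)` whenever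
`(k,ℓ) ∈ D` separates `j` from `i` and `j` lies in the piece adjacent to `(k,ℓ)`
(i.e. `(i,j)` crosses `(k,ℓ)` while `(j,k)` and `(j,ℓ)` cross no diagonal of `D`).
Then `m` is symmetric: `m(i,j) = m(j,i)` for all vertices `i`, `j`. -/
theorem stmt_13 (n : ℕ) (D : Finset (ZMod (n + 3) × ZMod (n + 3)))
    (hdiagonal : ∀ d ∈ D, d.1 ≠ d.2 ∧ d.2 ≠ d.1 + 1 ∧ d.1 ≠ d.2 + 1)
    (hnoncross : ∀ d ∈ D, ∀ d' ∈ D, ¬ Crosses (n + 3) d d')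
    (m : ZMod (n + 3) → ZMod (n + 3) → ℕ)
    (hrefl : ∀ i, m i i = 0)
    (hpiece : ∀ i j, i ≠ j → (∀ d ∈ D, ¬ Crosses (n + 3) (i, j) d) → m i j = 1)
    (hrec : ∀ i j k l, (k, l) ∈ D → Crosses (n + 3) (i, j) (k, l) →
      (∀ d ∈ D, ¬ Crosses (n + 3) (j, k) d) → (∀ d ∈ D, ¬ Crosses (n + 3) (j, l) d) →
      m i j = m i k + m i l) :
    ∀ i j, m i j = m j i :=
  stmt_13_general n D hnoncross m hpiece hrec
end
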